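/- arXiv:2509.07855 — 3 statements merged into one kernel-verified Lean document; each statement's English description precedes it below -/
import Mathlib

section
/- Majorana strings obtained from a ternary tree pairwise anticommute: if two root-to-leaf paths in a ternary tree with qubit-labeled internal nodes diverge at some node, the corresponding Pauli strings assign two distinct non-identity Paulis to that qubit, act identically (both trivially or both nontrivially with equal Pauli) on all qubits on the shared prefix, and act with at most one nontrivially on qubits after the divergence on only one path; hence the two Pauli strings anticommute. -/
noncomputable section

def PauliX : Matrix (Fin 2) (Fin 2) ℂ := !![0, 1; 1, 0]
def PauliY : Matrix (Fin 2) (Fin 2) ℂ := !![0, -Complex.I; Complex.I, 0]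
def PauliZ : Matrix (Fin 2) (Fin 2) ℂ := !![1, 0; 0, -1]

def tensorOp {n : ℕ} (f : Fin n → Matrix (Fin 2) (Fin 2) ℂ) :
    Matrix (Fin n → Fin 2) (Fin n → Fin 2) ℂ :=
  fun x y => ∏ k, f k (x k) (y k)

lemma tensorOp_mul {n : ℕ} (P Q : Fin n → Matrix (Fin 2) (Fin 2) ℂ) :
    tensorOp P * tensorOp Q = tensorOp (fun k => P k * Q k) := by
  ext x y
  simp only [tensorOp, Matrix.mul_apply]
  rw [Fintype.prod_sum]
  apply Finset.sum_congr rfl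
  intro z _
  rw [Finset.prod_mul_distrib]

lemma pauli_anticomm (A B : Matrix (Fin 2) (Fin 2) ℂ)
    (hA : A ∈ ({1, PauliX, PauliY, PauliZ} : Set (Matrix (Fin 2) (Fin 2) ℂ)))
    (hB : B ∈ ({1, PauliX, PauliY, PauliZ} : Set (Matrix (Fin 2) (Fin 2) ℂ)))
    (hA1 : A ≠ 1) (hB1 : B ≠ 1) (hAB : A ≠ B) :
    B * A = -(A * B) := by
  simp only [Set.mem_insert_iff, Set.mem_singleton_iff] at hA hB
  rcases hA with h | h | h | h <;> rcases hB with h' | h' | h' | h' <;>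
    subst h <;> subst h' <;> first
      | exact absurd rfl hA1
      | exact absurd rfl hB1
      | exact absurd rfl hAB
      | (ext i j; fin_cases i <;> fin_cases j <;>
          simp [PauliX, PauliY, PauliZ, Matrix.mul_apply, Fin.sum_univ_two])

/-- Majorana strings obtained from two distinct root-to-leaf
paths of a ternary tree anticommute.  The structural consequences of the tree
are: at the divergence qubit `q` the two strings carry two distinct
non-identity Paulis; at every other qubit they either agree (shared prefix) or
at most one of them is non-identity (qubits lying on only one of the two
paths, or on neither).  Hence the two Pauli strings anticommute. -/
theorem ternary_tree_strings_anticommute {n : ℕ}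
    (P Q : Fin n → Matrix (Fin 2) (Fin 2) ℂ)
    (hP : ∀ i, P i ∈ ({1, PauliX, PauliY, PauliZ} : Set (Matrix (Fin 2) (Fin 2) ℂ)))
    (hQ : ∀ i, Q i ∈ ({1, PauliX, PauliY, PauliZ} : Set (Matrix (Fin 2) (Fin 2) ℂ)))
    (q : Fin n)
    (hPq : P q ≠ 1) (hQq : Q q ≠ 1) (hne : P q ≠ Q q)
    (hrest : ∀ i, i ≠ q → (P i = Q i ∨ P i = 1 ∨ Q i = 1)) :
    tensorOp P * tensorOp Q + tensorOp Q * tensorOp P = 0 := by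
  rw [tensorOp_mul, tensorOp_mul]
  have hq : Q q * P q = -(P q * Q q) := pauli_anticomm _ _ (hP q) (hQ q) hPq hQq hne
  have hoff : ∀ k, k ≠ q → Q k * P k = P k * Q k := by
    intro k hk
    rcases hrest k hk with h | h | h <;> simp [h]
  ext x y
  simp only [tensorOp, Matrix.add_apply, Matrix.zero_apply]
  rw [← Finset.mul_prod_erase Finset.univ (fun k => (P k * Q k) (x k) (y k))
      (Finset.mem_univ q),
    ← Finset.mul_prod_erase Finset.univ (fun k => (Q k * P k) (x k) (y k))
      (Finset.mem_univ q)]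
  have hprod : ∏ k ∈ Finset.univ.erase q, (Q k * P k) (x k) (y k)
      = ∏ k ∈ Finset.univ.erase q, (P k * Q k) (x k) (y k) := by
    apply Finset.prod_congr rfl
    intro k hk
    rw [hoff k (Finset.mem_erase.mp hk).1]
  rw [hprod, hq]
  simp [Matrix.neg_apply]

end
end

section
/- For a finite set of 2n distinct elements arranged in a list l = (a, b_0, …, b_{2n-2}), pairing the list by reflection P_i(l) = {l_i, l_{2n-1-i}}, and letting l^k be the list after applying the first k adjacent cyclic transpositions moving the distinguished element a forward, the union over 0 ≤ k ≤ 2n(2n−1) of the sets of quartets formed as unions of two distinct pairs of P(l^k) contains every 4-element subset that includes a. -/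
/-!
Each full lap of `l 0` (`2n` steps) rotates the other `2n - 1` elements cyclically by one place,
so `cycList l (2n q + r)` has `l 0` at position `r` and the others in their cyclic order starting
from the `q`-th one (`cycIndex`). The three cyclic gaps between the other three elements of `t`
add up to the odd number `2n - 1`, so one of them, `x`, sees the other two at offsets `u < w` of
odd sum. Putting `l 0` at position `r = (u + w - 1) / 2` if `u + w < 2n`, and `r = (u + w + 1) / 2 - n`
otherwise, on the suitable lap pairs `l 0` with `x` and the other two with each other.
-/

/-- The list after `k` adjacent cyclic transpositions: `cycList l k = s_k(l)`
where `s_k = τ_{k,k+1} ∘ ⋯ ∘ τ_{1,2}` and `τ_{j,j+1}` swaps the `j`-th and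
`(j+1)`-th positions (indices mod `2n`); this moves the distinguished element
`l 0` forward cyclically by `k` positions. -/
def cycList {n : ℕ} {α : Type*} (l : ZMod (2 * n) → α) : ℕ → ZMod (2 * n) → α
  | 0 => l
  | k + 1 => (cycList l k) ∘ (Equiv.swap ((k : ℕ) : ZMod (2 * n)) ((k + 1 : ℕ) : ZMod (2 * n)))

/-- The reflection pairing `P(l) = { {l_i, l_{2n-1-i}} }`; in `ZMod (2n)`
arithmetic the partner of index `i` is `-1 - i`. -/
def pairing {n : ℕ} {α : Type*} [DecidableEq α] (l : ZMod (2 * n) → α) :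
    Set (Finset α) :=
  {s | ∃ i : ZMod (2 * n), s = {l i, l (-1 - i)}}

/-- The quartets `F(l)`: unions of two distinct pairs of `P(l)`. -/
def quartets {n : ℕ} {α : Type*} [DecidableEq α] (l : ZMod (2 * n) → α) :
    Set (Finset α) :=
  {t | ∃ p ∈ pairing l, ∃ q ∈ pairing l, p ≠ q ∧ t = p ∪ q}

open Finset Function

/-- `cycList l (2n * q + r)` holds `l (cycIndex n q r i)` at position `i`: the element `l 0` sits
at position `r`, and the others, read left to right skipping `l 0`, are `l (q + 1), l (q + 2), …`
with indices running cyclically through `1, …, 2n - 1`. -/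
def cycIndex (n q r i : ℕ) : ℕ :=
  if i = r then 0 else ((if i < r then i else i - 1) + q) % (2 * n - 1) + 1

section cycIndex

variable {n q r i : ℕ}

@[simp]
lemma cycIndex_self : cycIndex n q r r = 0 := by
  simp [cycIndex]

lemma cycIndex_of_lt (h : i < r) : cycIndex n q r i = (i + q) % (2 * n - 1) + 1 := by
  simp [cycIndex, h.ne, h]

lemma cycIndex_of_gt (h : r < i) : cycIndex n q r i = (i - 1 + q) % (2 * n - 1) + 1 := by
  simp [cycIndex, h.ne', h.not_gt]

lemma cycIndex_zero_zero (hi : i < 2 * n) : cycIndex n 0 0 i = i := by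
  rcases Nat.eq_zero_or_pos i with rfl | hi0
  · exact cycIndex_self
  · rw [cycIndex_of_gt hi0, Nat.add_zero, Nat.mod_eq_of_lt (by omega)]
    omega

private lemma mod_add_one_congr {M a b : ℕ} (h : a = b ∨ a = b + M ∨ b = a + M) :
    a % M + 1 = b % M + 1 := by
  rcases h with rfl | rfl | rfl <;> simp

lemma cycIndex_step (hn : 0 < n) (k j : ℕ) (hj : j < 2 * n) :
    cycIndex n ((k + 1) / (2 * n)) ((k + 1) % (2 * n)) j =
      cycIndex n (k / (2 * n)) (k % (2 * n))
        (Equiv.swap (k % (2 * n)) ((k + 1) % (2 * n)) j) := by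
  obtain ⟨q, r, hr, rfl⟩ : ∃ q r, r < 2 * n ∧ k = 2 * n * q + r :=
    ⟨_, _, Nat.mod_lt k (by omega), (Nat.div_add_mod k _).symm⟩
  have hdiv : (2 * n * q + r) / (2 * n) = q := by
    rw [Nat.mul_add_div (by omega), Nat.div_eq_of_lt hr, Nat.add_zero]
  have hmod : (2 * n * q + r) % (2 * n) = r := by
    rw [Nat.mul_add_mod, Nat.mod_eq_of_lt hr]
  rw [hdiv, hmod]
  rcases (by omega : r + 1 < 2 * n ∨ r + 1 = 2 * n) with hlt | heq
  · have hdiv' : (2 * n * q + r + 1) / (2 * n) = q := by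
      rw [Nat.add_assoc, Nat.mul_add_div (by omega), Nat.div_eq_of_lt hlt, Nat.add_zero]
    have hmod' : (2 * n * q + r + 1) % (2 * n) = r + 1 := by
      rw [Nat.add_assoc, Nat.mul_add_mod, Nat.mod_eq_of_lt hlt]
    rw [hdiv', hmod']
    simp only [cycIndex, Equiv.swap_apply_def]
    split_ifs <;> first | rfl | omega | (apply mod_add_one_congr; omega)
  · have hk : 2 * n * q + r + 1 = 2 * n * (q + 1) := by rw [Nat.mul_succ]; omega
    rw [hk, Nat.mul_div_cancel_left _ (by omega), Nat.mul_mod_right]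
    simp only [cycIndex, Equiv.swap_apply_def]
    split_ifs <;> first | rfl | omega | (apply mod_add_one_congr; omega)

end cycIndex

section cycList

variable {α : Type*} {n : ℕ} {l : ZMod (2 * n) → α}

lemma cycList_apply (hn : 0 < n) (k : ℕ) (i : ZMod (2 * n)) :
    cycList l k i = l (cycIndex n (k / (2 * n)) (k % (2 * n)) i.val) := by
  have : NeZero (2 * n) := ⟨by omega⟩
  induction k generalizing i with
  | zero => simp [cycList, cycIndex_zero_zero (ZMod.val_lt i)]
  | succ k ih =>
    rw [cycList, comp_apply, ih, ← (ZMod.val_injective _).swap_apply, ZMod.val_natCast,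
      ZMod.val_natCast, cycIndex_step hn k _ (ZMod.val_lt i)]

lemma cycList_natCast_apply (hn : 0 < n) {q r i : ℕ} (hr : r < 2 * n) (hi : i < 2 * n) :
    cycList l (2 * n * q + r) i = l (cycIndex n q r i) := by
  rw [cycList_apply hn, ZMod.val_cast_of_lt hi, Nat.mul_add_div (by omega),
    Nat.div_eq_of_lt hr, Nat.add_zero, Nat.mul_add_mod, Nat.mod_eq_of_lt hr]

lemma cycList_injective (hl : Injective l) : ∀ k, Injective (cycList l k)
  | 0 => hl
  | k + 1 => (cycList_injective hl k).comp (Equiv.injective _)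

end cycList

lemma ZMod.neg_one_sub_natCast {n i : ℕ} (hi : i < n) :
    (-1 - i : ZMod n) = ((n - 1 - i : ℕ) : ZMod n) := by
  rw [Nat.cast_sub (by omega), Nat.cast_sub (by omega), ZMod.natCast_self]
  ring

lemma ZMod.natCast_ne_natCast_of_lt {n a b : ℕ} (ha : a < n) (hb : b < n) (h : a ≠ b) :
    (a : ZMod n) ≠ b := fun hab => h <| by
  rw [← ZMod.val_cast_of_lt ha, ← ZMod.val_cast_of_lt hb, hab]

lemma insert_pair_mem_quartets {α : Type*} [DecidableEq α] {n : ℕ} {l : ZMod (2 * n) → α}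
    (hl : Injective l) {i j : ZMod (2 * n)} (hji : j ≠ i) (hji' : j ≠ -1 - i) :
    ({l i, l (-1 - i), l j, l (-1 - j)} : Finset α) ∈ quartets l := by
  refine ⟨{l i, l (-1 - i)}, ⟨i, rfl⟩, {l j, l (-1 - j)}, ⟨j, rfl⟩, fun h => ?_,
    by rw [insert_union, singleton_union]⟩
  have hj : l j ∈ ({l i, l (-1 - i)} : Finset α) := h ▸ mem_insert_self _ _
  rcases mem_insert.mp hj with hj | hj
  · exact hji (hl hj)
  · exact hji' (hl (mem_singleton.mp hj))

section quartets

variable {α : Type*} [DecidableEq α] {n : ℕ} {l : ZMod (2 * n) → α}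

lemma mem_quartets_cycList (hn : 0 < n) (hl : Injective l) {q r p : ℕ} (hr : r < 2 * n)
    (hp : p < 2 * n) (hpr : p ≠ r) (hpr' : p + r ≠ 2 * n - 1) :
    ({l 0, l (cycIndex n q r (2 * n - 1 - r)), l (cycIndex n q r p),
      l (cycIndex n q r (2 * n - 1 - p))} : Finset α) ∈ quartets (cycList l (2 * n * q + r)) := by
  have hmem := insert_pair_mem_quartets (cycList_injective hl (2 * n * q + r))
    (ZMod.natCast_ne_natCast_of_lt hp hr hpr)
    (ZMod.neg_one_sub_natCast hr ▸ ZMod.natCast_ne_natCast_of_lt hp (by omega) (by omega))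
  rwa [ZMod.neg_one_sub_natCast hr, ZMod.neg_one_sub_natCast hp, cycList_natCast_apply hn hr hr,
    cycList_natCast_apply hn hr (by omega), cycList_natCast_apply hn hr hp,
    cycList_natCast_apply hn hr (by omega), cycIndex_self, Nat.cast_zero] at hmem

private lemma add_mod_mod_eq {M a b c d : ℕ} (h : a + b = c + M * d) : (a + b % M) % M = c % M := by
  rw [Nat.add_mod_mod, h, Nat.add_mul_mod_self_left]

/-- With `q = e + r + 1`, position `r < n` carries `l 0` and the mirror position `2n-1-r`
carries `l (e + 1)`; the positions of `e + u` and `e + w` are then mirror images of each other: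
on opposite sides of `r` when `u + w ≤ 2n - 1`, both to its right otherwise. -/
lemma exists_mem_quartets_of_offsets (hn : 0 < n) (hl : Injective l) {e u w : ℕ}
    (he : e < 2 * n - 1) (hu : 0 < u) (huw : u < w) (hw : w < 2 * n - 1) (hodd : Odd (u + w)) :
    ∃ k ≤ 2 * n * (2 * n - 1),
      ({l 0, l ((e + 1 : ℕ)), l (((e + u) % (2 * n - 1) + 1 : ℕ)),
        l (((e + w) % (2 * n - 1) + 1 : ℕ))} : Finset α) ∈ quartets (cycList l k) := by
  obtain ⟨m, hm⟩ := hodd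
  obtain ⟨r, p, hrn, hp, hpr, hpr', hY, hZ⟩ : ∃ r p, r < n ∧ p < 2 * n ∧ p ≠ r ∧ p + r ≠ 2 * n - 1 ∧
      cycIndex n ((e + r + 1) % (2 * n - 1)) r p = (e + u) % (2 * n - 1) + 1 ∧
      cycIndex n ((e + r + 1) % (2 * n - 1)) r (2 * n - 1 - p) = (e + w) % (2 * n - 1) + 1 := by
    rcases le_or_gt (u + w) (2 * n - 1) with hsum | hsum
    · refine ⟨m, 2 * n - 1 - (w - m - 1), by omega, by omega, by omega, by omega, ?_, ?_⟩
      · rw [cycIndex_of_gt (by omega)]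
        exact congrArg (· + 1) (add_mod_mod_eq (d := 1) (by omega))
      · rw [cycIndex_of_lt (by omega)]
        exact congrArg (· + 1) (add_mod_mod_eq (d := 0) (by omega))
    · refine ⟨m + 1 - n, u - (m + 1 - n), by omega, by omega, by omega, by omega, ?_, ?_⟩
      · rw [cycIndex_of_gt (by omega)]
        exact congrArg (· + 1) (add_mod_mod_eq (d := 0) (by omega))
      · rw [cycIndex_of_gt (by omega)]
        exact congrArg (· + 1) (add_mod_mod_eq (d := 0) (by omega))
  have hX : cycIndex n ((e + r + 1) % (2 * n - 1)) r (2 * n - 1 - r) = e + 1 := by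
    rw [cycIndex_of_gt (by omega), add_mod_mod_eq (c := e) (d := 1) ?_, Nat.mod_eq_of_lt he]
    omega
  have hq : (e + r + 1) % (2 * n - 1) < 2 * n - 1 := Nat.mod_lt _ (by omega)
  refine ⟨_, ?_, hX ▸ hY ▸ hZ ▸ mem_quartets_cycList hn hl (by omega) hp hpr hpr'⟩
  nlinarith

end quartets

def cyclicGap (M x y : ℕ) : ℕ :=
  if x ≤ y then y - x else y + M - x

section cyclicGap

variable {M x y z : ℕ}

lemma add_cyclicGap_mod (hx : x < M) (hy : y < M) : (x + cyclicGap M x y) % M = y := by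
  unfold cyclicGap
  split_ifs
  · rw [Nat.add_sub_cancel' ‹_›, Nat.mod_eq_of_lt hy]
  · rw [show x + (y + M - x) = y + M by omega, Nat.add_mod_right, Nat.mod_eq_of_lt hy]

lemma cyclicGap_add_cyclicGap (hx : x < M) (hy : y < M) (hxy : x ≠ y) :
    cyclicGap M x y + cyclicGap M y x = M := by
  unfold cyclicGap
  split_ifs <;> omega

/-- The six gaps between three points add up to `3M`, which is odd. -/
lemma odd_cyclicGap_add (hM : Odd M) (hx : x < M) (hy : y < M) (hz : z < M)
    (hxy : x ≠ y) (hxz : x ≠ z) (hyz : y ≠ z) :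
    Odd (cyclicGap M x y + cyclicGap M x z) ∨ Odd (cyclicGap M y z + cyclicGap M y x) ∨
      Odd (cyclicGap M z x + cyclicGap M z y) := by
  have := cyclicGap_add_cyclicGap hx hy hxy
  have := cyclicGap_add_cyclicGap hx hz hxz
  have := cyclicGap_add_cyclicGap hy hz hyz
  simp only [Nat.odd_iff] at hM ⊢
  omega

end cyclicGap

section main

variable {α : Type*} [DecidableEq α] {n : ℕ} {l : ZMod (2 * n) → α}

lemma exists_mem_quartets_of_odd_cyclicGap_add (hn : 0 < n) (hl : Injective l) {x y z : ℕ}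
    (hx : x < 2 * n - 1) (hy : y < 2 * n - 1) (hz : z < 2 * n - 1)
    (hxy : x ≠ y) (hxz : x ≠ z) (hyz : y ≠ z)
    (hodd : Odd (cyclicGap (2 * n - 1) x y + cyclicGap (2 * n - 1) x z)) :
    ∃ k ≤ 2 * n * (2 * n - 1), ({l 0, l ((x + 1 : ℕ)), l ((y + 1 : ℕ)), l ((z + 1 : ℕ))} :
      Finset α) ∈ quartets (cycList l k) := by
  wlog hlt : cyclicGap (2 * n - 1) x y < cyclicGap (2 * n - 1) x z generalizing y z
  · have hne : cyclicGap (2 * n - 1) x y ≠ cyclicGap (2 * n - 1) x z := fun h =>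
      hyz (by rw [← add_cyclicGap_mod hx hy, h, add_cyclicGap_mod hx hz])
    rw [pair_comm]
    exact this hz hy hxz hxy hyz.symm (by rwa [add_comm]) (by omega)
  have hpos : 0 < cyclicGap (2 * n - 1) x y := Nat.pos_of_ne_zero fun h =>
    hxy (by rw [← add_cyclicGap_mod hx hy, h, Nat.add_zero, Nat.mod_eq_of_lt hx])
  have hbound : cyclicGap (2 * n - 1) x z < 2 * n - 1 := by
    unfold cyclicGap; split_ifs <;> omega
  simpa only [add_cyclicGap_mod hx hy, add_cyclicGap_mod hx hz] using
    exists_mem_quartets_of_offsets hn hl hx hpos hlt hbound hodd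

lemma exists_natCast_add_one_eq (hn : 0 < n) {P : ZMod (2 * n)} (hP : P ≠ 0) :
    ∃ x < 2 * n - 1, P = ((x + 1 : ℕ) : ZMod (2 * n)) := by
  have : NeZero (2 * n) := ⟨by omega⟩
  have hpos : 0 < P.val := Nat.pos_of_ne_zero ((ZMod.val_ne_zero P).mpr hP)
  refine ⟨P.val - 1, by have := ZMod.val_lt P; omega, ?_⟩
  rw [Nat.sub_add_cancel hpos, ZMod.natCast_zmod_val]

lemma exists_eq_insert_three (hn : 0 < n) {t : Finset α} (hcard : t.card = 4) (ha : l 0 ∈ t)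
    (hsub : ↑t ⊆ Set.range l) :
    ∃ x y z, x < 2 * n - 1 ∧ y < 2 * n - 1 ∧ z < 2 * n - 1 ∧ x ≠ y ∧ x ≠ z ∧ y ≠ z ∧
      t = {l 0, l ((x + 1 : ℕ)), l ((y + 1 : ℕ)), l ((z + 1 : ℕ))} := by
  have hrest : ∀ b ∈ t.erase (l 0), ∃ x < 2 * n - 1, b = l ((x + 1 : ℕ)) := by
    intro b hb
    obtain ⟨P, rfl⟩ := hsub (mem_of_mem_erase hb)
    obtain ⟨x, hx, rfl⟩ := exists_natCast_add_one_eq hn fun h : P = 0 => ne_of_mem_erase hb (by rw [h])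
    exact ⟨x, hx, rfl⟩
  obtain ⟨b, c, d, hbc, hbd, hcd, he⟩ :=
    card_eq_three.mp (by rw [card_erase_of_mem ha, hcard] : (t.erase (l 0)).card = 3)
  obtain ⟨x, hx, rfl⟩ := hrest b (by simp [he])
  obtain ⟨y, hy, rfl⟩ := hrest c (by simp [he])
  obtain ⟨z, hz, rfl⟩ := hrest d (by simp [he])
  refine ⟨x, y, z, hx, hy, hz, ?_, ?_, ?_, by rw [← insert_erase ha, he]⟩
  · rintro rfl; exact hbc rfl
  · rintro rfl; exact hbd rfl
  · rintro rfl; exact hcd rfl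

end main

/-- For a list `l = (a, b_0, …, b_{2n-2})` of `2n` distinct
elements, the union over `0 ≤ k ≤ 2n(2n−1)` of the quartet sets `F(l^k)`
contains every 4-element subset of the elements that includes the
distinguished element `a = l 0`. -/
theorem cyclic_algorithm_covers_quartets
    {α : Type*} [DecidableEq α] (n : ℕ) (hn : 0 < n)
    (l : ZMod (2 * n) → α) (hinj : Function.Injective l)
    (t : Finset α) (hcard : t.card = 4) (ha : l 0 ∈ t)
    (hsub : ↑t ⊆ Set.range l) :
    ∃ k ≤ 2 * n * (2 * n - 1), t ∈ quartets (cycList l k) := by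
  obtain ⟨x, y, z, hx, hy, hz, hxy, hxz, hyz, rfl⟩ := exists_eq_insert_three hn hcard ha hsub
  have hM : Odd (2 * n - 1) := ⟨n - 1, by omega⟩
  have rotate : ∀ a b c d : α, ({a, b, c, d} : Finset α) = {a, c, d, b} := fun a b c d => by
    rw [insert_comm b c, pair_comm b d]
  rcases odd_cyclicGap_add hM hx hy hz hxy hxz hyz with h | h | h
  · exact exists_mem_quartets_of_odd_cyclicGap_add hn hinj hx hy hz hxy hxz hyz h
  · obtain ⟨k, hk, hmem⟩ :=
      exists_mem_quartets_of_odd_cyclicGap_add hn hinj hy hz hx hyz hxy.symm hxz.symm h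
    exact ⟨k, hk, by rwa [rotate]⟩
  · obtain ⟨k, hk, hmem⟩ :=
      exists_mem_quartets_of_odd_cyclicGap_add hn hinj hz hx hy hxz.symm hyz.symm hxy h
    exact ⟨k, hk, by rwa [rotate, rotate]⟩
end

section
/- With the same setup, the shorter union ⋃_{k=0}^{2n²−n} F(l^k) already contains all quartets involving the distinguished element a; in particular, the permutation s_{2n²−n} preserves the reflection pairing, i.e., P(s_{2n²−n}(l)) = P(l) as a set of unordered pairs of elements. -/
/-! ### Auxiliary development -/

/-- The explicit permutation performed by one "round" prefix of length `s`:
position-image function. -/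
def eFun (n s : ℕ) : ZMod (2 * n) → ZMod (2 * n) :=
  fun i => if i.val < s then i + 1 else if i.val = s then 0 else i

lemma eFun_of_lt {n s : ℕ} {i : ZMod (2 * n)} (h : i.val < s) : eFun n s i = i + 1 := by
  simp [eFun, h]

lemma eFun_of_eq {n s : ℕ} {i : ZMod (2 * n)} (h : i.val = s) : eFun n s i = 0 := by
  simp [eFun, h]

lemma eFun_of_gt {n s : ℕ} {i : ZMod (2 * n)} (h : s < i.val) : eFun n s i = i := by
  simp only [eFun]
  rw [if_neg (by omega), if_neg (by omega)]

lemma eFun_zero {n : ℕ} [NeZero (2 * n)] (i : ZMod (2 * n)) : eFun n 0 i = i := by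
  by_cases h : i.val = 0
  · rw [eFun_of_eq h, ← ZMod.natCast_zmod_val i, h, Nat.cast_zero]
  · exact eFun_of_gt (by omega)

lemma swap_add_right {m : ℕ} (x y i c : ZMod m) :
    Equiv.swap x y i + c = Equiv.swap (x + c) (y + c) (i + c) := by
  rcases eq_or_ne i x with rfl | hx
  · rw [Equiv.swap_apply_left, Equiv.swap_apply_left]
  · rcases eq_or_ne i y with rfl | hy
    · rw [Equiv.swap_apply_right, Equiv.swap_apply_right]
    · rw [Equiv.swap_apply_of_ne_of_ne hx hy,
        Equiv.swap_apply_of_ne_of_ne (fun h => hx (add_right_cancel h))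
          (fun h => hy (add_right_cancel h))]

lemma cycList_succ {n : ℕ} {α : Type*} (l : ZMod (2 * n) → α) (k : ℕ) (i : ZMod (2 * n)) :
    cycList l (k + 1) i = cycList l k (Equiv.swap ((k : ℕ) : ZMod (2 * n))
      ((k + 1 : ℕ) : ZMod (2 * n)) i) := rfl

lemma cycList_small {n : ℕ} {α : Type*} (hn : 0 < n) (l : ZMod (2 * n) → α) :
    ∀ s, s ≤ 2 * n - 1 → ∀ i, cycList l s i = l (eFun n s i) := by
  haveI : NeZero (2 * n) := ⟨by omega⟩
  intro s
  induction s with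
  | zero =>
    intro _ i
    show l i = l (eFun n 0 i)
    rw [eFun_zero]
  | succ s ih =>
    intro hs i
    rw [cycList_succ, ih (by omega)]
    congr 1
    have h1 : s < 2 * n := by omega
    have h2 : s + 1 < 2 * n := by omega
    have vs : ((s : ℕ) : ZMod (2 * n)).val = s := ZMod.val_cast_of_lt h1
    have vs1 : ((s + 1 : ℕ) : ZMod (2 * n)).val = s + 1 := ZMod.val_cast_of_lt h2
    rcases eq_or_ne i ((s : ℕ) : ZMod (2 * n)) with rfl | hx
    · rw [Equiv.swap_apply_left, eFun_of_gt (by rw [vs1]; omega), eFun_of_lt (by rw [vs]; omega)]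
      push_cast
      ring
    · rcases eq_or_ne i ((s + 1 : ℕ) : ZMod (2 * n)) with rfl | hy
      · rw [Equiv.swap_apply_right, eFun_of_eq vs, eFun_of_eq vs1]
      · rw [Equiv.swap_apply_of_ne_of_ne hx hy]
        have hxv : i.val ≠ s := fun h => hx (by rw [← ZMod.natCast_zmod_val i, h])
        have hyv : i.val ≠ s + 1 := fun h => hy (by rw [← ZMod.natCast_zmod_val i, h])
        by_cases hlt : i.val < s
        · rw [eFun_of_lt hlt, eFun_of_lt (by omega)]
        · rw [eFun_of_gt (by omega), eFun_of_gt (by omega)]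

lemma cycList_shift {n : ℕ} {α : Type*} (hn : 0 < n) (l : ZMod (2 * n) → α) :
    ∀ k (i : ZMod (2 * n)), cycList l (k + (2 * n - 1)) i = cycList l k (i + 1) := by
  haveI : NeZero (2 * n) := ⟨by omega⟩
  intro k
  induction k with
  | zero =>
    intro i
    rw [Nat.zero_add, cycList_small hn l (2 * n - 1) le_rfl i]
    show l _ = l (i + 1)
    congr 1
    by_cases h : i.val = 2 * n - 1
    · rw [eFun_of_eq h]
      have hi : i = ((2 * n - 1 : ℕ) : ZMod (2 * n)) := by rw [← ZMod.natCast_zmod_val i, h]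
      rw [hi, ← Nat.cast_add_one, show (2 * n - 1) + 1 = 2 * n by omega, ZMod.natCast_self]
    · have hlt : i.val < 2 * n - 1 := by have := ZMod.val_lt i; omega
      rw [eFun_of_lt hlt]
  | succ k ih =>
    intro i
    rw [show (k + 1) + (2 * n - 1) = (k + (2 * n - 1)) + 1 by omega, cycList_succ, ih,
      cycList_succ]
    congr 1
    rw [swap_add_right]
    have c1 : ((k + (2 * n - 1) : ℕ) : ZMod (2 * n)) + 1 = ((k : ℕ) : ZMod (2 * n)) := by
      rw [← Nat.cast_add_one, show (k + (2 * n - 1)) + 1 = k + 2 * n by omega,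
        Nat.cast_add, ZMod.natCast_self, add_zero]
    have c2 : ((k + (2 * n - 1) + 1 : ℕ) : ZMod (2 * n)) + 1 = ((k + 1 : ℕ) : ZMod (2 * n)) := by
      rw [← Nat.cast_add_one, show (k + (2 * n - 1) + 1) + 1 = (k + 1) + 2 * n by omega,
        Nat.cast_add, ZMod.natCast_self, add_zero]
    rw [c1, c2]

lemma cycList_closed {n : ℕ} {α : Type*} (hn : 0 < n) (l : ZMod (2 * n) → α) (s : ℕ)
    (hs : s ≤ 2 * n - 1) :
    ∀ q (i : ZMod (2 * n)),
      cycList l (q * (2 * n - 1) + s) i = l (eFun n s (i + ((q : ℕ) : ZMod (2 * n)))) := by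
  intro q
  induction q with
  | zero =>
    intro i
    rw [show 0 * (2 * n - 1) + s = s by omega, cycList_small hn l s hs i]
    norm_num
  | succ q ih =>
    intro i
    rw [show (q + 1) * (2 * n - 1) + s = (q * (2 * n - 1) + s) + (2 * n - 1) by ring,
      cycList_shift hn l, ih]
    congr 2
    push_cast
    ring

/-! ### The combinatorial core -/

/-- Success conditions at round `q`, in-round step `s`, for matching `0` with `X`
and `Y` with `Z`; `tx, ty, tz` are the `σ_s`-preimages of `X, Y, Z`. -/
def CoreP (n X Y Z s q tx ty tz : ℕ) : Prop :=
  1 ≤ X ∧ X ≤ 2 * n - 1 ∧ 1 ≤ Y ∧ Y ≤ 2 * n - 1 ∧ 1 ≤ Z ∧ Z ≤ 2 * n - 1 ∧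
  s ≤ 2 * n - 2 ∧ q + 1 ≤ n ∧
  ((X ≤ s ∧ tx + 1 = X) ∨ (s < X ∧ tx = X)) ∧
  ((Y ≤ s ∧ ty + 1 = Y) ∨ (s < Y ∧ ty = Y)) ∧
  ((Z ≤ s ∧ tz + 1 = Z) ∨ (s < Z ∧ tz = Z)) ∧
  (s + tx + 1 = 2 * q ∨ s + tx + 1 = 2 * q + 2 * n) ∧
  (ty + tz + 1 = 2 * q ∨ ty + tz + 1 = 2 * q + 2 * n)

lemma coreA (n a b c : ℕ) (ha : 1 ≤ a) (hab : a < b) (hbc : b < c) (hc : c ≤ 2 * n - 1)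
    (hp : (b + c) % 2 = 1) : ∃ s q tx ty tz, CoreP n a b c s q tx ty tz := by
  rcases le_or_gt (b + c) (2 * n + a - 1) with h | h
  · rcases le_or_gt (b + c) (2 * n - 1) with h' | h'
    · exact ⟨b + c - a - 1, (b + c - 1) / 2, a - 1, b - 1, c - 1, by unfold CoreP; omega⟩
    · exact ⟨b + c - a - 1, (b + c - 1 - 2 * n) / 2, a - 1, b - 1, c - 1,
        by unfold CoreP; omega⟩
  · rcases le_or_gt (b + c) (2 * n + 2 * a - 1) with h' | h'
    · exact ⟨b + c - a - 2 * n, (b + c + 1 - 2 * n) / 2, a, b, c, by unfold CoreP; omega⟩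
    · exact ⟨b + c + 1 - a - 2 * n, (b + c + 1 - 2 * n) / 2, a - 1, b, c,
        by unfold CoreP; omega⟩

lemma coreB (n a b c : ℕ) (ha : 1 ≤ a) (hab : a < b) (hbc : b < c) (hc : c ≤ 2 * n - 1)
    (hp : (a + c) % 2 = 0) : ∃ s q tx ty tz, CoreP n b a c s q tx ty tz := by
  rcases le_or_gt b (a + c - b) with h | h
  · rcases le_or_gt (a + c) (2 * n - 2) with h' | h'
    · exact ⟨a + c - b, (a + c) / 2, b - 1, a - 1, c, by unfold CoreP; omega⟩
    · exact ⟨a + c - b, (a + c - 2 * n) / 2, b - 1, a - 1, c, by unfold CoreP; omega⟩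
  · rcases le_or_gt (a + c) (2 * n - 2) with h' | h'
    · exact ⟨a + c - b - 1, (a + c) / 2, b, a - 1, c, by unfold CoreP; omega⟩
    · exact ⟨a + c - b - 1, (a + c - 2 * n) / 2, b, a - 1, c, by unfold CoreP; omega⟩

lemma coreC (n a b c : ℕ) (ha : 1 ≤ a) (hab : a < b) (hbc : b < c) (hc : c ≤ 2 * n - 1)
    (hp : (a + b) % 2 = 1) : ∃ s q tx ty tz, CoreP n c a b s q tx ty tz := by
  rcases le_or_gt c (a + b) with h | h
  · rcases le_or_gt (a + b + 1) (2 * n - 2) with h' | h'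
    · exact ⟨a + b - c, (a + b + 1) / 2, c, a, b, by unfold CoreP; omega⟩
    · exact ⟨a + b - c, (a + b + 1 - 2 * n) / 2, c, a, b, by unfold CoreP; omega⟩
  · rcases le_or_gt (2 * n + a + b - 1) (2 * c) with h' | h'
    · exact ⟨2 * n + a + b - c - 2, (a + b - 1) / 2, c, a - 1, b - 1, by unfold CoreP; omega⟩
    · exact ⟨2 * n + a + b - c - 1, (a + b - 1) / 2, c - 1, a - 1, b - 1,
        by unfold CoreP; omega⟩

lemma coreMain (n a b c : ℕ) (ha : 1 ≤ a) (hab : a < b) (hbc : b < c) (hc : c ≤ 2 * n - 1) :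
    ∃ X Y Z s q tx ty tz : ℕ,
      ((X, Y, Z) = (a, b, c) ∨ (X, Y, Z) = (b, a, c) ∨ (X, Y, Z) = (c, a, b)) ∧
      CoreP n X Y Z s q tx ty tz := by
  by_cases hac : (a + c) % 2 = 0
  · obtain ⟨s, q, tx, ty, tz, h⟩ := coreB n a b c ha hab hbc hc hac
    exact ⟨b, a, c, s, q, tx, ty, tz, Or.inr (Or.inl rfl), h⟩
  · by_cases hbcp : (b + c) % 2 = 1
    · obtain ⟨s, q, tx, ty, tz, h⟩ := coreA n a b c ha hab hbc hc hbcp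
      exact ⟨a, b, c, s, q, tx, ty, tz, Or.inl rfl, h⟩
    · obtain ⟨s, q, tx, ty, tz, h⟩ := coreC n a b c ha hab hbc hc (by omega)
      exact ⟨c, a, b, s, q, tx, ty, tz, Or.inr (Or.inr rfl), h⟩

/-! ### Assembly -/

lemma union4 {α : Type*} [DecidableEq α] (w x y z : α) :
    ({w, x, y, z} : Finset α) = {w, x} ∪ {y, z} := by
  ext e
  simp only [Finset.mem_insert, Finset.mem_singleton, Finset.mem_union]
  tauto

lemma quad_perm2 {α : Type*} [DecidableEq α] (w x y z : α) :
    ({w, y, x, z} : Finset α) = {w, x} ∪ {y, z} := by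
  ext e
  simp only [Finset.mem_insert, Finset.mem_singleton, Finset.mem_union]
  tauto

lemma quad_perm3 {α : Type*} [DecidableEq α] (w x y z : α) :
    ({w, y, z, x} : Finset α) = {w, x} ∪ {y, z} := by
  ext e
  simp only [Finset.mem_insert, Finset.mem_singleton, Finset.mem_union]
  tauto

lemma pairing_half {n : ℕ} {α : Type*} [DecidableEq α] (hn : 0 < n) (l : ZMod (2 * n) → α) :
    pairing (cycList l (2 * n ^ 2 - n)) = pairing l := by
  haveI : NeZero (2 * n) := ⟨by omega⟩
  have h1 : n ≤ 2 * n ^ 2 := by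
    calc n = n * 1 := (mul_one n).symm
    _ ≤ n * (2 * n) := Nat.mul_le_mul_left n (by omega)
    _ ≤ 2 * n ^ 2 := le_of_eq (by ring)
  have hN : 2 * n ^ 2 - n = n * (2 * n - 1) + 0 := by
    zify [h1, show 1 ≤ 2 * n by omega]
    ring
  have hE : ∀ i, cycList l (2 * n ^ 2 - n) i = l (i + ((n : ℕ) : ZMod (2 * n))) := by
    intro i
    rw [hN, cycList_closed hn l 0 (by omega), eFun_zero]
  have hnn : ((n : ℕ) : ZMod (2 * n)) + ((n : ℕ) : ZMod (2 * n)) = 0 := by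
    rw [← Nat.cast_add, show n + n = 2 * n by ring, ZMod.natCast_self]
  ext S
  simp only [pairing, Set.mem_setOf_eq]
  constructor
  · rintro ⟨i, rfl⟩
    refine ⟨i + ((n : ℕ) : ZMod (2 * n)), ?_⟩
    rw [hE, hE]
    have harg : (-1 - i : ZMod (2 * n)) + ((n : ℕ) : ZMod (2 * n)) =
        -1 - (i + ((n : ℕ) : ZMod (2 * n))) := by linear_combination hnn
    rw [harg]
  · rintro ⟨i, rfl⟩
    refine ⟨i - ((n : ℕ) : ZMod (2 * n)), ?_⟩
    rw [hE, hE]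
    have e1 : (i - ((n : ℕ) : ZMod (2 * n))) + ((n : ℕ) : ZMod (2 * n)) = i := by ring
    have e2 : (-1 - (i - ((n : ℕ) : ZMod (2 * n)))) + ((n : ℕ) : ZMod (2 * n)) = -1 - i := by
      linear_combination hnn
    rw [e1, e2]

set_option maxHeartbeats 1000000 in
lemma quartet_mem {n : ℕ} {α : Type*} [DecidableEq α] (hn : 0 < n) (l : ZMod (2 * n) → α)
    (hinj : Function.Injective l) (a b c : ℕ) (ha : 1 ≤ a) (hab : a < b) (hbc : b < c)
    (hc : c ≤ 2 * n - 1) :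
    ∃ k ≤ 2 * n ^ 2 - n,
      ({l 0, l ((a : ℕ) : ZMod (2 * n)), l ((b : ℕ) : ZMod (2 * n)),
        l ((c : ℕ) : ZMod (2 * n))} : Finset α) ∈ quartets (cycList l k) := by
  haveI : NeZero (2 * n) := ⟨by omega⟩
  obtain ⟨X, Y, Z, s, q, tx, ty, tz, hnam, hP⟩ := coreMain n a b c ha hab hbc hc
  unfold CoreP at hP
  obtain ⟨hX1, hX2, hY1, hY2, hZ1, hZ2, hs, hq, hXc, hYc, hZc, hv, hw⟩ := hP
  refine ⟨q * (2 * n - 1) + s, ?_, ?_⟩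
  · have h1 : q * (2 * n - 1) ≤ (n - 1) * (2 * n - 1) :=
      Nat.mul_le_mul_right _ (by omega)
    have hn2 : n ≤ 2 * n ^ 2 := by
      calc n = n * 1 := (mul_one n).symm
      _ ≤ n * (2 * n) := Nat.mul_le_mul_left n (by omega)
      _ ≤ 2 * n ^ 2 := le_of_eq (by ring)
    have h2 : (n - 1) * (2 * n - 1) + (2 * n - 2) ≤ 2 * n ^ 2 - n := by
      zify [show 1 ≤ n from hn, show 1 ≤ 2 * n by omega, show 2 ≤ 2 * n by omega, hn2]
      nlinarith
    omega
  · have hM : ∀ i, cycList l (q * (2 * n - 1) + s) i =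
        l (eFun n s (i + ((q : ℕ) : ZMod (2 * n)))) := cycList_closed hn l s (by omega) q
    have vs : ((s : ℕ) : ZMod (2 * n)).val = s := ZMod.val_cast_of_lt (by omega)
    have hcast2 : ∀ u v : ℕ, (u = 2 * v ∨ u = 2 * v + 2 * n) →
        ((u : ℕ) : ZMod (2 * n)) = 2 * ((v : ℕ) : ZMod (2 * n)) := by
      rintro u v (rfl | rfl)
      · push_cast; ring
      · rw [Nat.cast_add, ZMod.natCast_self, add_zero]; push_cast; ring
    have hv2 : ((s : ℕ) : ZMod (2 * n)) + ((tx : ℕ) : ZMod (2 * n)) + 1 =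
        2 * ((q : ℕ) : ZMod (2 * n)) := by
      have := hcast2 _ _ hv
      push_cast at this
      linear_combination this
    have hw2 : ((ty : ℕ) : ZMod (2 * n)) + ((tz : ℕ) : ZMod (2 * n)) + 1 =
        2 * ((q : ℕ) : ZMod (2 * n)) := by
      have := hcast2 _ _ hw
      push_cast at this
      linear_combination this
    have hres : ∀ M tm : ℕ, 1 ≤ M → M ≤ 2 * n - 1 →
        ((M ≤ s ∧ tm + 1 = M) ∨ (s < M ∧ tm = M)) →
        eFun n s ((tm : ℕ) : ZMod (2 * n)) = ((M : ℕ) : ZMod (2 * n)) := by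
      rintro M tm h1 h2 (⟨hMs, htm⟩ | ⟨hMs, htm⟩)
      · rw [eFun_of_lt (by rw [ZMod.val_cast_of_lt (show tm < 2 * n by omega)]; omega), ← htm]
        push_cast
        ring
      · rw [htm, eFun_of_gt (by rw [ZMod.val_cast_of_lt (show M < 2 * n by omega)]; omega)]
    refine ⟨{l 0, l ((X : ℕ) : ZMod (2 * n))},
      ⟨((s : ℕ) : ZMod (2 * n)) - ((q : ℕ) : ZMod (2 * n)), ?_⟩,
      {l ((Y : ℕ) : ZMod (2 * n)), l ((Z : ℕ) : ZMod (2 * n))},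
      ⟨((ty : ℕ) : ZMod (2 * n)) - ((q : ℕ) : ZMod (2 * n)), ?_⟩, ?_, ?_⟩
    · simp only [hM]
      have e1 : (((s : ℕ) : ZMod (2 * n)) - ((q : ℕ) : ZMod (2 * n))) +
          ((q : ℕ) : ZMod (2 * n)) = ((s : ℕ) : ZMod (2 * n)) := by ring
      have e2 : (-1 - (((s : ℕ) : ZMod (2 * n)) - ((q : ℕ) : ZMod (2 * n)))) +
          ((q : ℕ) : ZMod (2 * n)) = ((tx : ℕ) : ZMod (2 * n)) := by linear_combination - hv2
      rw [e1, e2, eFun_of_eq vs, hres X tx hX1 hX2 hXc]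
    · simp only [hM]
      have e1 : (((ty : ℕ) : ZMod (2 * n)) - ((q : ℕ) : ZMod (2 * n))) +
          ((q : ℕ) : ZMod (2 * n)) = ((ty : ℕ) : ZMod (2 * n)) := by ring
      have e2 : (-1 - (((ty : ℕ) : ZMod (2 * n)) - ((q : ℕ) : ZMod (2 * n)))) +
          ((q : ℕ) : ZMod (2 * n)) = ((tz : ℕ) : ZMod (2 * n)) := by linear_combination - hw2
      rw [e1, e2, hres Y ty hY1 hY2 hYc, hres Z tz hZ1 hZ2 hZc]
    · intro hcontra
      have h0 : l 0 ∈ ({l ((Y : ℕ) : ZMod (2 * n)), l ((Z : ℕ) : ZMod (2 * n))} : Finset α) :=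
        hcontra ▸ Finset.mem_insert_self _ _
      rcases Finset.mem_insert.mp h0 with h | h
      · have := congrArg ZMod.val (hinj h)
        rw [ZMod.val_zero, ZMod.val_cast_of_lt (show Y < 2 * n by omega)] at this
        omega
      · rw [Finset.mem_singleton] at h
        have := congrArg ZMod.val (hinj h)
        rw [ZMod.val_zero, ZMod.val_cast_of_lt (show Z < 2 * n by omega)] at this
        omega
    · rcases hnam with h | h | h <;> simp only [Prod.mk.injEq] at h <;>
          obtain ⟨rfl, rfl, rfl⟩ := h
      · exact union4 _ _ _ _
      · exact quad_perm2 _ _ _ _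
      · exact quad_perm3 _ _ _ _

lemma main1 {n : ℕ} {α : Type*} [DecidableEq α] (hn : 0 < n) (l : ZMod (2 * n) → α)
    (hinj : Function.Injective l) (x y z : ZMod (2 * n)) (hx0 : x ≠ 0) (hy0 : y ≠ 0)
    (hz0 : z ≠ 0) (hxy : x ≠ y) (hxz : x ≠ z) (hyz : y ≠ z) :
    ∃ k ≤ 2 * n ^ 2 - n, ({l 0, l x, l y, l z} : Finset α) ∈ quartets (cycList l k) := by
  haveI : NeZero (2 * n) := ⟨by omega⟩
  have valinj : ∀ p r : ZMod (2 * n), p.val = r.val → p = r := fun p r h => by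
    rw [← ZMod.natCast_zmod_val p, h, ZMod.natCast_zmod_val]
  have key : ∀ p r u : ZMod (2 * n), p ≠ 0 → p.val < r.val → r.val < u.val →
      ∃ k ≤ 2 * n ^ 2 - n, ({l 0, l p, l r, l u} : Finset α) ∈ quartets (cycList l k) := by
    intro p r u hp0 h1 h2
    have hp1 : 1 ≤ p.val := by
      have : p.val ≠ 0 := fun h => hp0 (by rw [← ZMod.natCast_zmod_val p, h, Nat.cast_zero])
      omega
    have hu2 : u.val ≤ 2 * n - 1 := by have := ZMod.val_lt u; omega
    obtain ⟨k, hk, hm⟩ := quartet_mem hn l hinj p.val r.val u.val hp1 h1 h2 hu2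
    rw [ZMod.natCast_zmod_val, ZMod.natCast_zmod_val, ZMod.natCast_zmod_val] at hm
    exact ⟨k, hk, hm⟩
  have swapgoal : ∀ p r u : ZMod (2 * n),
      ({l 0, l x, l y, l z} : Finset α) = ({l 0, l p, l r, l u} : Finset α) →
      (∃ k ≤ 2 * n ^ 2 - n, ({l 0, l p, l r, l u} : Finset α) ∈ quartets (cycList l k)) →
      ∃ k ≤ 2 * n ^ 2 - n, ({l 0, l x, l y, l z} : Finset α) ∈ quartets (cycList l k) := by
    intro p r u hE ⟨k, hk, hm⟩
    exact ⟨k, hk, hE ▸ hm⟩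
  rcases lt_trichotomy x.val y.val with h1 | h1 | h1
  · rcases lt_trichotomy y.val z.val with h2 | h2 | h2
    · exact key x y z hx0 h1 h2
    · exact absurd (valinj _ _ h2) hyz
    · rcases lt_trichotomy x.val z.val with h3 | h3 | h3
      · exact swapgoal x z y (by ext e; simp only [Finset.mem_insert, Finset.mem_singleton]; tauto)
          (key x z y hx0 h3 h2)
      · exact absurd (valinj _ _ h3) hxz
      · exact swapgoal z x y (by ext e; simp only [Finset.mem_insert, Finset.mem_singleton]; tauto)
          (key z x y hz0 h3 h1)
  · exact absurd (valinj _ _ h1) hxy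
  · rcases lt_trichotomy x.val z.val with h2 | h2 | h2
    · exact swapgoal y x z (by ext e; simp only [Finset.mem_insert, Finset.mem_singleton]; tauto)
        (key y x z hy0 h1 h2)
    · exact absurd (valinj _ _ h2) hxz
    · rcases lt_trichotomy y.val z.val with h3 | h3 | h3
      · exact swapgoal y z x (by ext e; simp only [Finset.mem_insert, Finset.mem_singleton]; tauto)
          (key y z x hy0 h3 h2)
      · exact absurd (valinj _ _ h3) hyz
      · exact swapgoal z y x (by ext e; simp only [Finset.mem_insert, Finset.mem_singleton]; tauto)
          (key z y x hz0 h3 h1)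

theorem cyclic_algorithm_half_cycle
    {α : Type*} [DecidableEq α] (n : ℕ) (hn : 0 < n)
    (l : ZMod (2 * n) → α) (hinj : Function.Injective l) :
    (∀ t : Finset α, t.card = 4 → l 0 ∈ t → ↑t ⊆ Set.range l →
        ∃ k ≤ 2 * n ^ 2 - n, t ∈ quartets (cycList l k)) ∧
    pairing (cycList l (2 * n ^ 2 - n)) = pairing l := by
  haveI : NeZero (2 * n) := ⟨by omega⟩
  constructor
  · intro t hcard hmem hsub
    have h3 : (t.erase (l 0)).card = 3 := by rw [Finset.card_erase_of_mem hmem, hcard]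
    obtain ⟨u, v, w, huv, huw, hvw, ht3⟩ := Finset.card_eq_three.mp h3
    have hu' : u ∈ t.erase (l 0) := by rw [ht3]; simp
    have hv' : v ∈ t.erase (l 0) := by rw [ht3]; simp
    have hw' : w ∈ t.erase (l 0) := by rw [ht3]; simp
    obtain ⟨x, hx⟩ := hsub (Finset.mem_coe.mpr (Finset.mem_of_mem_erase hu'))
    obtain ⟨y, hy⟩ := hsub (Finset.mem_coe.mpr (Finset.mem_of_mem_erase hv'))
    obtain ⟨z, hz⟩ := hsub (Finset.mem_coe.mpr (Finset.mem_of_mem_erase hw'))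
    have hx0 : x ≠ 0 := fun h => (Finset.mem_erase.mp hu').1 (by rw [← hx, h])
    have hy0 : y ≠ 0 := fun h => (Finset.mem_erase.mp hv').1 (by rw [← hy, h])
    have hz0 : z ≠ 0 := fun h => (Finset.mem_erase.mp hw').1 (by rw [← hz, h])
    have hxy : x ≠ y := fun h => huv (by rw [← hx, ← hy, h])
    have hxz : x ≠ z := fun h => huw (by rw [← hx, ← hz, h])
    have hyz : y ≠ z := fun h => hvw (by rw [← hy, ← hz, h])
    have htt : t = ({l 0, l x, l y, l z} : Finset α) := by
      rw [← Finset.insert_erase hmem, ht3, ← hx, ← hy, ← hz]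
    rw [htt]
    exact main1 hn l hinj x y z hx0 hy0 hz0 hxy hxz hyz
  · exact pairing_half hn l
end
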